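/- For every A > 0 there exist a constant C and an integer m₀ such that for every integer m ≥ m₀ and every real a with |a| ≤ A, the function f(r) = m/2 − r² + r·log((e/(2m))·e^{−a}·r) has exactly one zero r* in (0, ∞), and this zero satisfies |r* − √(m/2) + (1/4)·log m + (a + (3/2)·log 2 − 1)/2| ≤ C·(log m)²/√m. -/

import Mathlib

noncomputable section
open Real Set

/-- The matching function `f(r) = m/2 − r² + r·log((e/(2m))·e^{−a}·r)`. -/
def matchFun (m : ℕ) (a r : ℝ) : ℝ :=
  (m : ℝ) / 2 - r ^ 2 + r * Real.log (Real.exp 1 / (2 * m) * Real.exp (-a) * r)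

lemma sqrt2_bounds : Real.sqrt 2 ≤ 1.5 ∧ (1:ℝ) ≤ Real.sqrt 2 := by
  constructor <;>
    nlinarith [Real.sq_sqrt (show (0:ℝ) ≤ 2 by norm_num), Real.sqrt_nonneg 2]

set_option maxHeartbeats 2000000 in
theorem statement13 (A : ℝ) (hA : 0 < A) :
    ∃ C : ℝ, ∃ m₀ : ℕ, ∀ m : ℕ, m₀ ≤ m → ∀ a : ℝ, |a| ≤ A →
      (∃! r : ℝ, 0 < r ∧ matchFun m a r = 0) ∧
      (∀ r : ℝ, 0 < r → matchFun m a r = 0 →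
        |r - Real.sqrt ((m : ℝ) / 2) + (1 / 4) * Real.log m +
            (a + (3 / 2) * Real.log 2 - 1) / 2| ≤
          C * (Real.log m) ^ 2 / Real.sqrt m) := by
  refine ⟨5, 2 ^ 40 + ⌈Real.exp (2 * (A + 3))⌉₊, fun m hm a ha => ?_⟩
  have ha' := abs_le.mp ha
  have hlog2 : Real.log 2 < 0.6931471808 := Real.log_two_lt_d9
  have hlog2' : (0:ℝ) < Real.log 2 := Real.log_pos (by norm_num)
  -- basic size facts
  have hm40 : (2:ℝ) ^ 40 ≤ (m:ℝ) := by
    have h : (2 ^ 40 : ℕ) ≤ m := le_trans (Nat.le_add_right _ _) hm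
    exact_mod_cast h
  have hMpos : (0:ℝ) < (m:ℝ) := lt_of_lt_of_le (by norm_num) hm40
  have hexpM : Real.exp (2 * (A + 3)) ≤ (m:ℝ) := by
    have h : (⌈Real.exp (2 * (A + 3))⌉₊ : ℝ) ≤ (m:ℝ) := by
      exact_mod_cast le_trans (Nat.le_add_left _ _) hm
    exact le_trans (Nat.le_ceil _) h
  set M : ℝ := (m : ℝ) with hMdef
  set L : ℝ := Real.log M with hLdef
  have hLB : 2 * (A + 3) ≤ L := (Real.le_log_iff_exp_le hMpos).mpr hexpM
  have hL6 : 6 ≤ L := by linarith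
  have hL0 : (0:ℝ) < L := by linarith
  -- the quantity q = M^(1/4)
  set q : ℝ := Real.sqrt (Real.sqrt M) with hqdef
  have hsqM : (0:ℝ) < Real.sqrt M := Real.sqrt_pos.mpr hMpos
  have hq0 : 0 < q := Real.sqrt_pos.mpr hsqM
  have hq2 : q ^ 2 = Real.sqrt M := Real.sq_sqrt hsqM.le
  have hq4 : q ^ 4 = M := by
    have h : (q ^ 2) ^ 2 = M := by rw [hq2]; exact Real.sq_sqrt hMpos.le
    rw [← h]; ring
  have hq320 : (320:ℝ) ≤ q := by
    by_contra h
    push_neg at h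
    have h2 : q ^ 4 < 320 ^ 4 := pow_lt_pow_left₀ h hq0.le (by norm_num)
    rw [hq4] at h2
    norm_num at h2
    linarith [hm40]
  -- L ≤ 8 * sqrt q
  set p : ℝ := Real.sqrt q with hpdef
  have hp0 : 0 < p := Real.sqrt_pos.mpr hq0
  have hp2 : p ^ 2 = q := Real.sq_sqrt hq0.le
  have hLp : L ≤ 8 * p := by
    have h1 : Real.log q = L / 4 := by
      rw [hLdef, ← hq4, Real.log_pow]; push_cast; ring
    have h2 : Real.log p = L / 8 := by
      have h3 : Real.log q = 2 * Real.log p := by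
        rw [← hp2, Real.log_pow]; push_cast; ring
      rw [h1] at h3; linarith
    have h3 : Real.log p ≤ p - 1 := Real.log_le_sub_one_of_pos hp0
    rw [h2] at h3; linarith
  have hL2q : L ^ 2 ≤ 64 * q := by
    have h1 : L * L ≤ (8 * p) * (8 * p) :=
      mul_le_mul hLp hLp (by linarith) (by positivity)
    have h2 : (8 * p) * (8 * p) = 64 * q := by rw [← hp2]; ring
    calc L ^ 2 = L * L := sq L
      _ ≤ 64 * q := by linarith
  -- s = sqrt (M/2)
  set s : ℝ := Real.sqrt (M / 2) with hsdef
  have hs0 : 0 < s := Real.sqrt_pos.mpr (by linarith)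
  have hs2 : s ^ 2 = M / 2 := Real.sq_sqrt (by linarith)
  have hlogs : Real.log s = (L - Real.log 2) / 2 := by
    rw [hsdef, Real.log_sqrt (by linarith), Real.log_div (ne_of_gt hMpos) two_ne_zero, hLdef]
  have h2s : Real.sqrt 2 * s = Real.sqrt M := by
    have h := Real.sqrt_mul (by norm_num : (0:ℝ) ≤ 2) (M / 2)
    rw [show (2:ℝ) * (M / 2) = M by ring] at h
    rw [hsdef, ← h]
  have hsqrt2 := sqrt2_bounds
  have hsq2 : q ^ 2 / 2 ≤ s := by
    have h1 : Real.sqrt 2 * s = q ^ 2 := by rw [h2s, hq2]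
    have h2 : Real.sqrt 2 * s ≤ 1.5 * s := mul_le_mul_of_nonneg_right hsqrt2.1 hs0.le
    linarith
  have hsL : 2 * L ≤ s := by
    have hp1 : 1 ≤ p := by
      by_contra hcon
      push_neg at hcon
      have : p * p < 1 * 1 := by
        apply mul_lt_mul' hcon.le hcon hp0.le; norm_num
      rw [← sq] at this
      rw [hp2] at this
      linarith
    have h1 : p ≤ q := by
      rw [← hp2]
      calc p = p * 1 := (mul_one p).symm
        _ ≤ p * p := mul_le_mul_of_nonneg_left hp1 hp0.le
        _ = p ^ 2 := (sq p).symm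
    have hq32 : 32 * q ≤ q ^ 2 := by
      have h := mul_le_mul_of_nonneg_right (show (32:ℝ) ≤ q by linarith) hq0.le
      calc 32 * q ≤ q * q := h
        _ = q ^ 2 := (sq q).symm
    linarith [hLp, hsq2]
  -- δ
  set δ : ℝ := 5 * L ^ 2 / Real.sqrt M with hδdef
  have hδpos : 0 < δ := by positivity
  have hδ1 : δ ≤ 1 := by
    rw [hδdef, div_le_one hsqM, ← hq2]
    have h := mul_le_mul_of_nonneg_right hq320 hq0.le
    have h2 : q * q = q ^ 2 := (sq q).symm
    linarith [hL2q]
  -- constants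
  set K : ℝ := (1 - a - (3/2) * Real.log 2) - L / 2 with hKdef
  set u₀ : ℝ := K / 2 with hu₀def
  have hKabs : |K| ≤ L := by
    rw [abs_le]
    constructor <;> [skip; skip] <;>
      (rw [hKdef]; linarith [ha'.1, ha'.2, hlog2, hlog2', hLB])
  have hKabs' := abs_le.mp hKabs
  -- the positive constant c in the log
  set c : ℝ := Real.exp 1 / (2 * M) * Real.exp (-a) with hcdef
  have hc0 : 0 < c := by positivity
  -- key identity
  have hfeq : ∀ u : ℝ, 0 < s + u →
      matchFun m a (s + u) = -2 * s * (u - u₀) +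
        (u * K - u ^ 2 + (s + u) * Real.log ((s + u) / s)) := by
    intro u hu
    have hlogc : Real.log (c * (s + u)) = K + Real.log ((s + u) / s) := by
      rw [hcdef, Real.log_mul (by positivity) (ne_of_gt hu),
        Real.log_mul (by positivity) (Real.exp_ne_zero _),
        Real.log_div (Real.exp_ne_zero 1) (by positivity),
        Real.log_exp, Real.log_exp,
        Real.log_mul two_ne_zero (ne_of_gt hMpos),
        Real.log_div (ne_of_gt hu) (ne_of_gt hs0), hKdef, ← hLdef]
      linarith [hlogs]
    have heq : matchFun m a (s + u) = M / 2 - (s + u) ^ 2 + (s + u) * Real.log (c * (s + u)) := by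
      simp only [matchFun, hcdef, ← hMdef]
    rw [heq, hlogc, show M / 2 = s ^ 2 from hs2.symm, hu₀def]
    ring
  -- remainder bound
  have hR : ∀ u : ℝ, |u| ≤ L →
      |u * K - u ^ 2 + (s + u) * Real.log ((s + u) / s)| ≤ 5 * L ^ 2 := by
    intro u hu
    have hu' := abs_le.mp hu
    have hsu : s / 2 ≤ s + u := by linarith
    have hsu0 : 0 < s + u := by linarith
    set x : ℝ := Real.log ((s + u) / s) with hxdef
    have hx1 : x ≤ u / s := by
      have h := Real.log_le_sub_one_of_pos (show 0 < (s+u)/s by positivity)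
      have h2 : (s + u) / s - 1 = u / s := by field_simp; ring
      rw [h2] at h
      exact h
    have hx2 : -(2 * L / s) ≤ x := by
      have h := Real.log_le_sub_one_of_pos (show 0 < s/(s+u) by positivity)
      have heq : Real.log (s / (s + u)) = -x := by
        rw [hxdef, Real.log_div (ne_of_gt hs0) (ne_of_gt hsu0),
          Real.log_div (ne_of_gt hsu0) (ne_of_gt hs0)]
        ring
      rw [heq] at h
      have h2 : s / (s + u) - 1 = -u / (s + u) := by field_simp; ring
      rw [h2] at h
      have h3 : -u / (s + u) ≤ 2 * L / s := by
        rw [div_le_div_iff₀ hsu0 hs0]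
        have p1 : -u * s ≤ L * s :=
          mul_le_mul_of_nonneg_right (by linarith [hu'.1]) hs0.le
        have p2 : L * (2 * L) ≤ L * s := mul_le_mul_of_nonneg_left hsL hL0.le
        have p3 : L * -L ≤ L * u := mul_le_mul_of_nonneg_left hu'.1 hL0.le
        linarith [p1, p2, p3]
      linarith
    have hxabs : |x| ≤ 2 * L / s := by
      rw [abs_le]
      refine ⟨hx2, le_trans hx1 ?_⟩
      rw [div_le_div_iff₀ hs0 hs0]
      have p1 : u * s ≤ L * s := mul_le_mul_of_nonneg_right hu'.2 hs0.le
      have p2 : 0 ≤ L * s := mul_nonneg hL0.le hs0.le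
      linarith [p1, p2]
    have hterm : |(s + u) * x| ≤ 3 * L := by
      rw [abs_mul, abs_of_pos hsu0]
      calc (s + u) * |x| ≤ (s + u) * (2 * L / s) :=
            mul_le_mul_of_nonneg_left hxabs hsu0.le
        _ ≤ 3 * L := by
            have hkey : (s + u) * (2 * L / s) = 2 * L * (s + u) / s := by ring
            rw [hkey, div_le_iff₀ hs0]
            linarith [mul_le_mul_of_nonneg_left hu'.2 hL0.le,
              mul_le_mul_of_nonneg_left hsL hL0.le]
    have h1 : |u * K| ≤ L ^ 2 := by
      rw [abs_mul]
      have h := mul_le_mul hu hKabs (abs_nonneg K) hL0.le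
      calc |u| * |K| ≤ L * L := h
        _ = L ^ 2 := (sq L).symm
    have h2 : u ^ 2 ≤ L ^ 2 := sq_le_sq' hu'.1 hu'.2
    calc |u * K - u ^ 2 + (s + u) * x|
        ≤ |u * K - u ^ 2| + |(s + u) * x| := abs_add_le _ _
      _ ≤ |u * K| + |u ^ 2| + |(s + u) * x| := by linarith [abs_sub (u * K) (u ^ 2)]
      _ ≤ L ^ 2 + L ^ 2 + 3 * L := by
          rw [abs_of_nonneg (sq_nonneg u)]
          linarith
      _ ≤ 5 * L ^ 2 := by
          have h := mul_le_mul_of_nonneg_left (show (1:ℝ) ≤ L by linarith) hL0.le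
          linarith
  -- sign at the endpoints
  have hgap : 5 * L ^ 2 < 2 * s * δ := by
    have h1 : δ * (Real.sqrt 2 * s) = 5 * L ^ 2 := by
      rw [hδdef, h2s]; field_simp
    have h2 : δ * (Real.sqrt 2 * s) ≤ δ * (1.5 * s) :=
      mul_le_mul_of_nonneg_left (mul_le_mul_of_nonneg_right hsqrt2.1 hs0.le) hδpos.le
    have h3 : 0 < δ * s := mul_pos hδpos hs0
    linarith [h1, h2, h3]
  have hu₀abs : |u₀| ≤ L / 2 := by
    rw [hu₀def, abs_div]
    simp only [abs_two]
    linarith [hKabs]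
  have hu₀' := abs_le.mp hu₀abs
  set x₁ : ℝ := s + (u₀ - δ) with hx₁def
  set x₂ : ℝ := s + (u₀ + δ) with hx₂def
  have hx₁pos : 0 < x₁ := by rw [hx₁def]; linarith
  have hx₂pos : 0 < x₂ := by rw [hx₂def]; linarith
  have hub : ∀ t : ℝ, |t| ≤ δ → |u₀ + t| ≤ L := by
    intro t ht
    have ht' := abs_le.mp ht
    rw [abs_le]; constructor <;> linarith
  have hf1 : 0 < matchFun m a x₁ := by
    rw [hx₁def, hfeq (u₀ - δ) (by linarith)]
    have hRb := hR (u₀ - δ) (by have h := hub (-δ) (by rw [abs_neg, abs_of_pos hδpos]); rwa [← sub_eq_add_neg] at h)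
    have hRb' := abs_le.mp hRb
    have : -2 * s * (u₀ - δ - u₀) = 2 * s * δ := by ring
    rw [this]
    linarith [hRb'.1]
  have hf2 : matchFun m a x₂ < 0 := by
    rw [hx₂def, hfeq (u₀ + δ) (by linarith)]
    have hRb := hR (u₀ + δ) (hub δ (by rw [abs_of_pos hδpos]))
    have hRb' := abs_le.mp hRb
    have : -2 * s * (u₀ + δ - u₀) = -(2 * s * δ) := by ring
    rw [this]
    linarith [hRb'.2]
  -- derivative and strict antitonicity on Ioi 0
  have hmatch : ∀ r : ℝ, matchFun m a r = M / 2 - r ^ 2 + r * Real.log (c * r) := by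
    intro r; simp only [matchFun, hcdef, ← hMdef]
  have hderiv : ∀ r : ℝ, 0 < r →
      HasDerivAt (matchFun m a) (-(2 * r) + (Real.log (c * r) + 1)) r := by
    intro r hr
    have hcr : c * r ≠ 0 := by positivity
    have h1 : HasDerivAt (fun y : ℝ => c * y) c r := by
      simpa using (hasDerivAt_id r).const_mul c
    have h2 : HasDerivAt (fun y : ℝ => Real.log (c * y)) ((c * r)⁻¹ * c) r :=
      (Real.hasDerivAt_log hcr).comp r h1
    have h3 : HasDerivAt (fun y : ℝ => y * Real.log (c * y))
        (1 * Real.log (c * r) + r * ((c * r)⁻¹ * c)) r :=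
      (hasDerivAt_id r).mul h2
    have h4 : HasDerivAt (fun y : ℝ => M / 2 - y ^ 2 + y * Real.log (c * y))
        (0 - 2 * r + (1 * Real.log (c * r) + r * ((c * r)⁻¹ * c))) r := by
      refine HasDerivAt.add (HasDerivAt.sub (hasDerivAt_const r (M / 2)) ?_) h3
      simpa using hasDerivAt_pow 2 r
    have h5 : (fun y : ℝ => M / 2 - y ^ 2 + y * Real.log (c * y)) = matchFun m a := by
      funext y; rw [hmatch y]
    rw [h5] at h4
    convert h4 using 1
    have : r * ((c * r)⁻¹ * c) = 1 := by field_simp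
    rw [this]; ring
  have hcont : ContinuousOn (matchFun m a) (Ioi 0) := by
    have h5 : (fun y : ℝ => M / 2 - y ^ 2 + y * Real.log (c * y)) = matchFun m a := by
      funext y; rw [hmatch y]
    rw [← h5]
    refine ContinuousOn.add (ContinuousOn.sub continuousOn_const ?_)
      (ContinuousOn.mul continuousOn_id ?_)
    · exact (continuous_pow 2).continuousOn
    · refine ContinuousOn.log ((continuous_const.mul continuous_id).continuousOn) ?_
      intro y hy
      have : 0 < y := hy
      positivity
  have hanti : StrictAntiOn (matchFun m a) (Ioi 0) := by
    refine strictAntiOn_of_deriv_neg (convex_Ioi 0) hcont ?_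
    intro r hr
    rw [interior_Ioi] at hr
    have hr' : 0 < r := hr
    rw [(hderiv r hr').deriv]
    have hlogcr : Real.log (c * r) = (1 - Real.log 2 - L - a) + Real.log r := by
      rw [hcdef, Real.log_mul (by positivity) (ne_of_gt hr'),
        Real.log_mul (by positivity) (Real.exp_ne_zero _),
        Real.log_div (Real.exp_ne_zero 1) (by positivity), Real.log_exp, Real.log_exp,
        Real.log_mul two_ne_zero (ne_of_gt hMpos), ← hLdef]
      ring
    have hlogr : Real.log r ≤ 2 * r - 1 - Real.log 2 := by
      have h := Real.log_le_sub_one_of_pos (show (0:ℝ) < 2 * r by linarith [hr'])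
      rw [Real.log_mul two_ne_zero (ne_of_gt hr')] at h
      linarith
    rw [hlogcr]
    linarith [ha'.1, hLB, hlogr, hlog2']
  -- existence of the zero
  have hzero : ∃ r ∈ Ioo x₁ x₂, matchFun m a r = 0 := by
    have hmono : x₁ ≤ x₂ := by rw [hx₁def, hx₂def]; linarith
    have hsub : Icc x₁ x₂ ⊆ Ioi 0 := fun y hy => lt_of_lt_of_le hx₁pos hy.1
    have h := intermediate_value_Ioo' hmono (hcont.mono hsub)
    have h0 : (0:ℝ) ∈ Ioo (matchFun m a x₂) (matchFun m a x₁) := ⟨hf2, hf1⟩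
    obtain ⟨r, hr1, hr2⟩ := h h0
    exact ⟨r, hr1, hr2⟩
  obtain ⟨rstar, hrmem, hrzero⟩ := hzero
  have hrstarpos : 0 < rstar := lt_trans hx₁pos hrmem.1
  constructor
  · refine ⟨rstar, ⟨hrstarpos, hrzero⟩, ?_⟩
    intro y hy
    exact hanti.injOn hy.1 hrstarpos (hy.2.trans hrzero.symm)
  · intro r hr hfr
    have hgt : x₁ < r := by
      by_contra h
      push_neg at h
      rcases lt_or_eq_of_le h with h' | h'
      · have := hanti hr hx₁pos h'
        rw [hfr] at this
        linarith
      · rw [h'] at hfr; linarith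
    have hlt : r < x₂ := by
      by_contra h
      push_neg at h
      rcases lt_or_eq_of_le h with h' | h'
      · have := hanti hx₂pos hr h'
        rw [hfr] at this
        linarith
      · rw [← h'] at hfr; linarith
    have hgoal : r - s + 1 / 4 * L + (a + 3 / 2 * Real.log 2 - 1) / 2
        = r - (s + u₀) := by
      rw [hu₀def, hKdef]
      ring
    rw [hgoal, abs_le]
    constructor <;> linarith [hgt, hlt, hx₁def, hx₂def]
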